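/- arXiv:solv-int/9710023 — 7 statements merged into one kernel-verified Lean document; each statement's English description precedes it below -/
import Mathlib

section
/- Fix k, z0 ∈ ℂ with k ≠ 0, and define y(z) = tan(Log(k(z - z0))), where Log is the principal branch of the complex logarithm. Then at every point z such that k(z - z0) does not lie on the closed negative real axis and cos(Log(k(z - z0))) ≠ 0, the function y is twice complex differentiable and satisfies (1 + y(z)^2) y''(z) + (1 - 2 y(z)) (y'(z))^2 = 0. -/
open Complex

/-- Painlevé's example: for `k ≠ 0`, the function `y(z) = tan(Log(k(z - z0)))`
is twice complex differentiable and satisfies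
`(1 + y²) y'' + (1 - 2y) (y')² = 0` wherever `k(z - z0)` avoids the closed
negative real axis and `cos(Log(k(z - z0))) ≠ 0`. -/
theorem tan_log_solves_painleve_example
    (k z0 : ℂ) (hk : k ≠ 0) (y : ℂ → ℂ)
    (hy : ∀ z : ℂ, y z = Complex.tan (Complex.log (k * (z - z0)))) :
    ∀ z : ℂ, k * (z - z0) ∈ Complex.slitPlane →
      Complex.cos (Complex.log (k * (z - z0))) ≠ 0 →
      DifferentiableAt ℂ y z ∧ DifferentiableAt ℂ (deriv y) z ∧
      (1 + (y z) ^ 2) * deriv (deriv y) z + (1 - 2 * y z) * (deriv y z) ^ 2 = 0 := by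
  have hyfun : y = fun t => Complex.tan (Complex.log (k * (t - z0))) := funext hy
  -- key derivative formula at any good point
  have key : ∀ w : ℂ, k * (w - z0) ∈ Complex.slitPlane →
      Complex.cos (Complex.log (k * (w - z0))) ≠ 0 →
      HasDerivAt y ((1 + (y w) ^ 2) / (w - z0)) w := by
    intro w hs hc
    have hw0 : k * (w - z0) ≠ 0 := Complex.slitPlane_ne_zero hs
    have hwz : w - z0 ≠ 0 := fun h => hw0 (by rw [h, mul_zero])
    have hinner : HasDerivAt (fun t : ℂ => k * (t - z0)) k w := by
      simpa using ((hasDerivAt_id w).sub_const z0).const_mul k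
    have hlog := (Complex.hasDerivAt_log hs).comp w hinner
    have htan := (Complex.hasDerivAt_tan hc).comp w hlog
    rw [hyfun]
    refine htan.congr_deriv ?_
    have hpyth : Complex.sin (Complex.log (k * (w - z0))) ^ 2
        + Complex.cos (Complex.log (k * (w - z0))) ^ 2 = 1 :=
      Complex.sin_sq_add_cos_sq _
    simp only [Complex.tan_eq_sin_div_cos]
    field_simp
    ring_nf at hpyth ⊢
    linear_combination -hpyth
  intro z hs hc
  have h1 : HasDerivAt y ((1 + (y z) ^ 2) / (z - z0)) z := key z hs hc
  have hw0 : k * (z - z0) ≠ 0 := Complex.slitPlane_ne_zero hs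
  have hwz : z - z0 ≠ 0 := fun h => hw0 (by rw [h, mul_zero])
  -- eventual equality of deriv y with the formula
  have hcontw : Continuous (fun t : ℂ => k * (t - z0)) := by continuity
  have ev1 : ∀ᶠ w in nhds z, k * (w - z0) ∈ Complex.slitPlane :=
    hcontw.continuousAt.preimage_mem_nhds (Complex.isOpen_slitPlane.mem_nhds hs)
  have hcontc : ContinuousAt (fun t : ℂ => Complex.cos (Complex.log (k * (t - z0)))) z := by
    exact Complex.continuous_cos.continuousAt.comp
      (((Complex.hasDerivAt_log hs).comp z (by simpa using
        ((hasDerivAt_id z).sub_const z0).const_mul k)).differentiableAt.continuousAt)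
  have ev2 : ∀ᶠ w in nhds z,
      Complex.cos (Complex.log (k * (w - z0))) ≠ 0 := hcontc.eventually_ne hc
  have heq : deriv y =ᶠ[nhds z] fun w => (1 + (y w) ^ 2) / (w - z0) := by
    filter_upwards [ev1, ev2] with w h1 h2
    exact (key w h1 h2).deriv
  -- derivative of the formula
  have hg : HasDerivAt (fun w => (1 + (y w) ^ 2) / (w - z0))
      ((2 * y z * ((1 + (y z) ^ 2) / (z - z0)) * (z - z0) - (1 + (y z) ^ 2) * 1)
        / (z - z0) ^ 2) z := by
    have hnum : HasDerivAt (fun w => 1 + (y w) ^ 2)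
        (2 * y z * ((1 + (y z) ^ 2) / (z - z0))) z := by
      have := (h1.pow 2).const_add 1
      refine this.congr_deriv ?_
      ring
    have hden : HasDerivAt (fun w : ℂ => w - z0) 1 z := (hasDerivAt_id z).sub_const z0
    exact hnum.div hden hwz
  have hderiv2 : deriv (deriv y) z =
      (2 * y z * ((1 + (y z) ^ 2) / (z - z0)) * (z - z0) - (1 + (y z) ^ 2) * 1)
        / (z - z0) ^ 2 := by
    rw [heq.deriv_eq]
    exact hg.deriv
  refine ⟨h1.differentiableAt, ?_, ?_⟩
  · exact (heq.differentiableAt_iff).mpr hg.differentiableAt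
  · rw [hderiv2, h1.deriv]
    field_simp
    ring
end

section
/- Fix k, z0 ∈ ℂ with k ≠ 0. For each natural number n define z_n = z0 + k^{-1} exp(-(n + 1/2)π). Then z_n ≠ z0 for every n, the sequence z_n converges to z0 as n → ∞, and at each z_n one has Log(k(z_n - z0)) = -(n + 1/2)π and hence cos(Log(k(z_n - z0))) = 0, so the function y(z) = tan(Log(k(z - z0))) is singular at every z_n. In particular the singularities of y accumulate at the movable point z0. -/
open Complex Filter

/-- The singularities of `y(z) = tan(Log(k(z - z0)))` lie at the points
`z_n = z0 + k⁻¹ exp(-(n + 1/2)π)`, which are distinct from `z0` and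
accumulate at the movable point `z0`; at each `z_n` the principal logarithm
takes the value `-(n + 1/2)π`, where the cosine vanishes, so `y` is singular
there. -/
theorem tan_log_singularities_accumulate
    (k z0 : ℂ) (hk : k ≠ 0) (zn : ℕ → ℂ)
    (hzn : ∀ n : ℕ, zn n = z0 + k⁻¹ * Complex.exp (-((n : ℂ) + 1 / 2) * (Real.pi : ℂ))) :
    (∀ n : ℕ, zn n ≠ z0) ∧
    Tendsto zn atTop (nhds z0) ∧
    (∀ n : ℕ, Complex.log (k * (zn n - z0)) = -((n : ℂ) + 1 / 2) * (Real.pi : ℂ)) ∧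
    (∀ n : ℕ, Complex.cos (Complex.log (k * (zn n - z0))) = 0) := by
  have key : ∀ n : ℕ, k * (zn n - z0) = Complex.exp (-((n : ℂ) + 1 / 2) * (Real.pi : ℂ)) := by
    intro n
    rw [hzn n]
    field_simp
    ring
  have hlog : ∀ n : ℕ, Complex.log (k * (zn n - z0)) = -((n : ℂ) + 1 / 2) * (Real.pi : ℂ) := by
    intro n
    rw [key n]
    apply Complex.log_exp
    · simp [Real.pi_pos]
    · simp [Real.pi_pos.le]
  refine ⟨?_, ?_, hlog, ?_⟩
  · intro n h
    have := key n
    rw [h, sub_self, mul_zero] at this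
    exact (Complex.exp_ne_zero _) this.symm
  · have hre : ∀ n : ℕ, Complex.exp (-((n : ℂ) + 1 / 2) * (Real.pi : ℂ))
        = ((Real.exp (-((n : ℝ) + 1 / 2) * Real.pi) : ℝ) : ℂ) := by
      intro n
      rw [Complex.ofReal_exp]
      congr 1; push_cast; ring
    have h1 : Tendsto (fun n : ℕ => Real.exp (-((n : ℝ) + 1 / 2) * Real.pi)) atTop (nhds 0) := by
      apply Real.tendsto_exp_atBot.comp
      apply Tendsto.atBot_mul_const Real.pi_pos
      apply tendsto_neg_atBot_iff.mpr
      exact tendsto_atTop_add_const_right _ _ tendsto_natCast_atTop_atTop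
    have h2 : Tendsto (fun n : ℕ => z0 + k⁻¹ * ((Real.exp (-((n : ℝ) + 1 / 2) * Real.pi) : ℝ) : ℂ))
        atTop (nhds (z0 + k⁻¹ * ((0 : ℝ) : ℂ))) := by
      apply Tendsto.const_add
      apply Tendsto.const_mul
      exact (Complex.continuous_ofReal.tendsto 0).comp h1
    simp only [Complex.ofReal_zero, mul_zero, add_zero] at h2
    refine h2.congr fun n => ?_
    rw [hzn n, hre n]
  · intro n
    rw [hlog n, Complex.cos_eq_zero_iff]
    exact ⟨-(n + 1), by push_cast; ring⟩
end

section
/- Fix k, x0 ∈ ℂ. The function y(x) = k · tan(k^3 (x - x0)) satisfies (y''(x) + y(x)^3 y'(x))^2 = y(x)^2 (y'(x))^2 (4 y'(x) + y(x)^4) at every point x where cos(k^3(x - x0)) ≠ 0. -/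
open Complex

private lemma hasDerivAt_aux1 (k x0 : ℂ) (x : ℂ)
    (hx : Complex.cos (k ^ 3 * (x - x0)) ≠ 0) :
    HasDerivAt (fun x => k * Complex.tan (k ^ 3 * (x - x0)))
      (k ^ 4 / Complex.cos (k ^ 3 * (x - x0)) ^ 2) x := by
  have hu : HasDerivAt (fun x => k ^ 3 * (x - x0)) (k ^ 3) x := by
    simpa using ((hasDerivAt_id x).sub_const x0).const_mul (k ^ 3)
  have ht := (Complex.hasDerivAt_tan hx).comp x hu
  have := ht.const_mul k
  refine this.congr_deriv ?_
  field_simp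

private lemma hasDerivAt_aux2 (k x0 : ℂ) (x : ℂ)
    (hx : Complex.cos (k ^ 3 * (x - x0)) ≠ 0) :
    HasDerivAt (fun x => k ^ 4 / Complex.cos (k ^ 3 * (x - x0)) ^ 2)
      (2 * k ^ 7 * Complex.sin (k ^ 3 * (x - x0)) / Complex.cos (k ^ 3 * (x - x0)) ^ 3) x := by
  have hu : HasDerivAt (fun x => k ^ 3 * (x - x0)) (k ^ 3) x := by
    simpa using ((hasDerivAt_id x).sub_const x0).const_mul (k ^ 3)
  have hc : HasDerivAt (fun x => Complex.cos (k ^ 3 * (x - x0)))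
      (-Complex.sin (k ^ 3 * (x - x0)) * k ^ 3) x :=
    (Complex.hasDerivAt_cos _).comp x hu
  have hc2 : HasDerivAt (fun x => Complex.cos (k ^ 3 * (x - x0)) ^ 2)
      (2 * Complex.cos (k ^ 3 * (x - x0)) ^ 1 * (-Complex.sin (k ^ 3 * (x - x0)) * k ^ 3)) x := by
    simpa using hc.fun_pow 2
  have h2 : Complex.cos (k ^ 3 * (x - x0)) ^ 2 ≠ 0 := pow_ne_zero _ hx
  have := (hc2.inv h2).const_mul (k ^ 4)
  refine this.congr_deriv ?_
  field_simp

/-- The general solution `y(x) = k tan(k³(x - x0))` of the equation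
`(y'' + y³y')² = y²(y')²(4y' + y⁴)` satisfies the equation at every point
where `cos(k³(x - x0)) ≠ 0`. -/
theorem k_tan_solves_generalized_painleve_example
    (k x0 : ℂ) (y : ℂ → ℂ)
    (hy : ∀ x : ℂ, y x = k * Complex.tan (k ^ 3 * (x - x0))) :
    ∀ x : ℂ, Complex.cos (k ^ 3 * (x - x0)) ≠ 0 →
      (deriv (deriv y) x + (y x) ^ 3 * deriv y x) ^ 2
        = (y x) ^ 2 * (deriv y x) ^ 2 * (4 * deriv y x + (y x) ^ 4) := by
  have hyf : y = fun x => k * Complex.tan (k ^ 3 * (x - x0)) := funext hy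
  subst hyf
  intro x hx
  -- the set where cos ≠ 0 is open
  have hcont : Continuous fun x : ℂ => Complex.cos (k ^ 3 * (x - x0)) := by fun_prop
  have hopen : IsOpen {x : ℂ | Complex.cos (k ^ 3 * (x - x0)) ≠ 0} :=
    isOpen_compl_singleton.preimage hcont
  have hmem : {x : ℂ | Complex.cos (k ^ 3 * (x - x0)) ≠ 0} ∈ nhds x := hopen.mem_nhds hx
  have hd1 : deriv (fun x => k * Complex.tan (k ^ 3 * (x - x0))) x
      = k ^ 4 / Complex.cos (k ^ 3 * (x - x0)) ^ 2 := (hasDerivAt_aux1 k x0 x hx).deriv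
  have heq : deriv (fun x => k * Complex.tan (k ^ 3 * (x - x0)))
      =ᶠ[nhds x] fun x => k ^ 4 / Complex.cos (k ^ 3 * (x - x0)) ^ 2 :=
    Filter.eventuallyEq_of_mem hmem (fun z hz => (hasDerivAt_aux1 k x0 z hz).deriv)
  have hd2 : deriv (deriv (fun x => k * Complex.tan (k ^ 3 * (x - x0)))) x
      = 2 * k ^ 7 * Complex.sin (k ^ 3 * (x - x0)) / Complex.cos (k ^ 3 * (x - x0)) ^ 3 := by
    rw [heq.deriv_eq]
    exact (hasDerivAt_aux2 k x0 x hx).deriv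
  rw [hd1, hd2]
  simp only [Complex.tan_eq_sin_div_cos]
  have hpyth := Complex.sin_sq_add_cos_sq (k ^ 3 * (x - x0))
  set s := Complex.sin (k ^ 3 * (x - x0))
  set c := Complex.cos (k ^ 3 * (x - x0))
  field_simp
  linear_combination (4 * k ^ 14 * s ^ 2 * c ^ 2) * hpyth
end

section
/- Fix x0 ∈ ℂ and define y(x) = ((4/3)/(x - x0))^{1/3} using the principal branch of the complex power. Then at every x ≠ x0 such that (4/3)/(x - x0) does not lie on the closed negative real axis, y satisfies y''(x) + y(x)^3 y'(x) = 0 and 4 y'(x) + y(x)^4 = 0, and hence (y''(x) + y(x)^3 y'(x))^2 = y(x)^2 (y'(x))^2 (4 y'(x) + y(x)^4). -/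
open Complex

private lemma cpow_helper {z : ℂ} (hz : z ≠ 0) (a : ℂ) :
    z ^ (a + 2) = z ^ a * z ^ 2 := by
  rw [cpow_add _ _ hz]
  norm_num [cpow_natCast]

/-- The special solution `y(x) = ((4/3)/(x - x0))^(1/3)` (principal branch)
of `(y'' + y³y')² = y²(y')²(4y' + y⁴)`: away from `x0` and the branch cut it
satisfies `y'' + y³y' = 0` and `4y' + y⁴ = 0`, hence the full equation. -/
theorem branch_point_solution_generalized_painleve_example
    (x0 : ℂ) (y : ℂ → ℂ)
    (hy : ∀ x : ℂ, y x = ((4 / 3) / (x - x0)) ^ ((1 : ℂ) / 3)) :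
    ∀ x : ℂ, x ≠ x0 → (4 / 3) / (x - x0) ∈ Complex.slitPlane →
      deriv (deriv y) x + (y x) ^ 3 * deriv y x = 0 ∧
      4 * deriv y x + (y x) ^ 4 = 0 ∧
      (deriv (deriv y) x + (y x) ^ 3 * deriv y x) ^ 2
        = (y x) ^ 2 * (deriv y x) ^ 2 * (4 * deriv y x + (y x) ^ 4) := by
  set g : ℂ → ℂ := fun x => (4 / 3) / (x - x0) with hg
  -- derivative of g
  have hgd : ∀ x : ℂ, x ≠ x0 → HasDerivAt g (-(3/4) * g x ^ 2) x := by
    intro x hx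
    have hsub : x - x0 ≠ 0 := sub_ne_zero.2 hx
    have h1 : HasDerivAt (fun x : ℂ => x - x0) 1 x := (hasDerivAt_id x).sub_const x0
    have := (hasDerivAt_const x ((4:ℂ)/3)).div h1 hsub
    convert this using 1
    · rfl
    · rfl
    · rfl
    simp only [hg]
    field_simp
    ring
  have hgne : ∀ x : ℂ, x ≠ x0 → g x ≠ 0 := by
    intro x hx
    have hsub : x - x0 ≠ 0 := sub_ne_zero.2 hx
    simp [hg, div_ne_zero, hsub]
  -- first derivative of y
  have hyd : ∀ x : ℂ, x ≠ x0 → g x ∈ Complex.slitPlane →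
      HasDerivAt y (-(1/4) * g x ^ ((4:ℂ)/3)) x := by
    intro x hx hsp
    have hyf : y = fun x => g x ^ ((1:ℂ)/3) := funext hy
    have h := (hgd x hx).cpow_const (c := (1:ℂ)/3) hsp
    rw [← hyf] at h
    convert h using 1
    have h2 : g x ^ ((1:ℂ)/3 - 1 + 2) = g x ^ ((1:ℂ)/3 - 1) * g x ^ 2 :=
      cpow_helper (hgne x hx) _
    have h3 : (1:ℂ)/3 - 1 + 2 = 4/3 := by norm_num
    rw [h3] at h2
    rw [h2]; ring
  -- open set where things hold
  set U : Set ℂ := {x | x ≠ x0} ∩ g ⁻¹' Complex.slitPlane with hU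
  have hUopen : IsOpen U := by
    have hcont : ContinuousOn g {x | x ≠ x0} := by
      apply ContinuousOn.div continuousOn_const (by fun_prop)
      intro x hx
      exact sub_ne_zero.2 hx
    exact hcont.isOpen_inter_preimage (isOpen_ne) Complex.isOpen_slitPlane
  -- deriv y agrees with the formula on U
  have hder_eq : ∀ x ∈ U, deriv y x = -(1/4) * g x ^ ((4:ℂ)/3) := by
    intro x hx
    exact (hyd x hx.1 hx.2).deriv
  -- second derivative
  intro x hx hsp
  have hxU : x ∈ U := ⟨hx, hsp⟩
  have hEv : deriv y =ᶠ[nhds x] (fun x => -(1/4) * g x ^ ((4:ℂ)/3)) :=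
    Filter.eventuallyEq_of_mem (hUopen.mem_nhds hxU) hder_eq
  have h2d : HasDerivAt (deriv y) ((1/4) * g x ^ ((7:ℂ)/3)) x := by
    have h := ((hgd x hx).cpow_const hsp (c := (4:ℂ)/3)).const_mul (-(1/4) : ℂ)
    refine HasDerivAt.congr_of_eventuallyEq ?_ hEv
    convert h using 1
    · rfl
    have h2 : g x ^ ((4:ℂ)/3 - 1 + 2) = g x ^ ((4:ℂ)/3 - 1) * g x ^ 2 :=
      cpow_helper (hgne x hx) _
    have h3 : (4:ℂ)/3 - 1 + 2 = 7/3 := by norm_num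
    rw [h3] at h2
    rw [h2]; ring
  have hd1 : deriv y x = -(1/4) * g x ^ ((4:ℂ)/3) := hder_eq x hxU
  have hd2 : deriv (deriv y) x = (1/4) * g x ^ ((7:ℂ)/3) := h2d.deriv
  -- powers of y
  have hy3 : y x ^ 3 = g x := by
    rw [hy x, ← cpow_nat_mul]
    norm_num
    rfl
  have hy4 : y x ^ 4 = g x ^ ((4:ℂ)/3) := by
    rw [hy x, ← cpow_nat_mul]
    norm_num
    rfl
  have hmul : g x * g x ^ ((4:ℂ)/3) = g x ^ ((7:ℂ)/3) := by
    nth_rewrite 1 [← cpow_one (g x)]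
    rw [← cpow_add _ _ (hgne x hx)]
    norm_num
  have e1 : deriv (deriv y) x + (y x) ^ 3 * deriv y x = 0 := by
    rw [hd1, hd2, hy3]
    linear_combination (-(1/4) : ℂ) * hmul
  have e2 : 4 * deriv y x + (y x) ^ 4 = 0 := by
    rw [hd1, hy4]; ring
  exact ⟨e1, e2, by rw [e1, e2]; ring⟩
end

section
/- Fix α, β, z0 ∈ ℂ with α ≠ 0, and define u(z) = α · exp(β (z - z0)^{-1/2}) using the principal branch of the complex power. Then at every z ≠ z0 such that z - z0 does not lie on the closed negative real axis, u(z) ≠ 0 and u satisfies 3 u'(z) u'''(z) = 5 (u''(z))^2 - (u'(z))^2 u''(z)/u(z) - (u'(z))^4/u(z)^2. -/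
open Complex

/-- `τ z = (z - z0)^(-1/2)` (principal branch). -/
noncomputable def mbesTau (z0 z : ℂ) : ℂ := (z - z0) ^ (-(1 : ℂ) / 2)

/-- `E z = α exp(β (z - z0)^(-1/2))`. -/
noncomputable def mbesE (α β z0 z : ℂ) : ℂ := α * Complex.exp (β * mbesTau z0 z)

lemma mbesTau_hasDerivAt (z0 z : ℂ) (hz : z - z0 ∈ Complex.slitPlane) :
    HasDerivAt (mbesTau z0) (-(1 / 2) * mbesTau z0 z ^ 3) z := by
  have hzne : z - z0 ≠ 0 := Complex.slitPlane_ne_zero hz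
  have h1 : HasDerivAt (fun z : ℂ => z - z0) 1 z := (hasDerivAt_id z).sub_const z0
  have h2 := h1.cpow_const (c := -(1 : ℂ) / 2) hz
  have h3 : (z - z0) ^ (-(1 : ℂ) / 2 - 1) = mbesTau z0 z ^ 3 := by
    rw [show (-(1 : ℂ) / 2 - 1) = (-(1:ℂ)/2) + ((-(1:ℂ)/2) + (-(1:ℂ)/2)) by ring,
      Complex.cpow_add _ _ hzne, Complex.cpow_add _ _ hzne, mbesTau]
    ring
  have : HasDerivAt (fun z : ℂ => (z - z0) ^ (-(1 : ℂ) / 2))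
      (-(1 / 2) * mbesTau z0 z ^ 3) z := by
    convert h2 using 1
    rw [h3]; ring
  exact this

lemma mbesE_hasDerivAt (α β z0 z : ℂ) (hz : z - z0 ∈ Complex.slitPlane) :
    HasDerivAt (mbesE α β z0) (mbesE α β z0 z * (-(β / 2) * mbesTau z0 z ^ 3)) z := by
  have h := (((mbesTau_hasDerivAt z0 z hz).const_mul β).cexp.const_mul α)
  refine h.congr_deriv ?_
  simp only [mbesE]
  ring

lemma mbesD1_hasDerivAt (α β z0 z : ℂ) (hz : z - z0 ∈ Complex.slitPlane) :
    HasDerivAt (fun z => mbesE α β z0 z * (-(β / 2) * mbesTau z0 z ^ 3))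
      (mbesE α β z0 z * (β ^ 2 / 4 * mbesTau z0 z ^ 6 + 3 * β / 4 * mbesTau z0 z ^ 5)) z := by
  have hg : HasDerivAt (fun z => -(β / 2) * mbesTau z0 z ^ 3)
      (-(β / 2) * (3 * mbesTau z0 z ^ 2 * (-(1 / 2) * mbesTau z0 z ^ 3))) z :=
    (((mbesTau_hasDerivAt z0 z hz).pow 3).const_mul (-(β / 2))).congr_deriv (by ring)
  have h := (mbesE_hasDerivAt α β z0 z hz).mul hg
  refine h.congr_deriv ?_
  ring

lemma mbesD2_hasDerivAt (α β z0 z : ℂ) (hz : z - z0 ∈ Complex.slitPlane) :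
    HasDerivAt (fun z => mbesE α β z0 z * (β ^ 2 / 4 * mbesTau z0 z ^ 6
        + 3 * β / 4 * mbesTau z0 z ^ 5))
      (mbesE α β z0 z * (-(β ^ 3 / 8) * mbesTau z0 z ^ 9 - 9 * β ^ 2 / 8 * mbesTau z0 z ^ 8
        - 15 * β / 8 * mbesTau z0 z ^ 7)) z := by
  have hg : HasDerivAt (fun z => β ^ 2 / 4 * mbesTau z0 z ^ 6 + 3 * β / 4 * mbesTau z0 z ^ 5)
      (β ^ 2 / 4 * (6 * mbesTau z0 z ^ 5 * (-(1 / 2) * mbesTau z0 z ^ 3))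
        + 3 * β / 4 * (5 * mbesTau z0 z ^ 4 * (-(1 / 2) * mbesTau z0 z ^ 3))) z :=
    ((((mbesTau_hasDerivAt z0 z hz).pow 6).const_mul (β ^ 2 / 4)).add
      (((mbesTau_hasDerivAt z0 z hz).pow 5).const_mul (3 * β / 4))).congr_deriv (by ring)
  have h := (mbesE_hasDerivAt α β z0 z hz).mul hg
  refine h.congr_deriv ?_
  ring

/-- The general solution `u(z) = α exp(β (z - z0)^(-1/2))` (principal branch)
of the equation `3u'u''' = 5(u'')² - (u')²u''/u - (u')⁴/u²`, which has a
movable branched essential singularity at `z0`. -/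
theorem movable_branched_essential_singularity_example
    (α β z0 : ℂ) (hα : α ≠ 0) (u : ℂ → ℂ)
    (hu : ∀ z : ℂ, u z = α * Complex.exp (β * (z - z0) ^ (-(1 : ℂ) / 2))) :
    ∀ z : ℂ, z ≠ z0 → z - z0 ∈ Complex.slitPlane →
      u z ≠ 0 ∧
      3 * deriv u z * deriv (deriv (deriv u)) z
        = 5 * (deriv (deriv u) z) ^ 2
          - (deriv u z) ^ 2 * deriv (deriv u) z / u z
          - (deriv u z) ^ 4 / (u z) ^ 2 := by
  have hufun : u = mbesE α β z0 := funext fun z => hu z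
  subst hufun
  have hSopen : IsOpen {z : ℂ | z - z0 ∈ Complex.slitPlane} :=
    Complex.isOpen_slitPlane.preimage (by fun_prop)
  have hd1 : ∀ z ∈ {z : ℂ | z - z0 ∈ Complex.slitPlane},
      deriv (mbesE α β z0) z = mbesE α β z0 z * (-(β / 2) * mbesTau z0 z ^ 3) :=
    fun z hz => (mbesE_hasDerivAt α β z0 z hz).deriv
  have hd2 : ∀ z ∈ {z : ℂ | z - z0 ∈ Complex.slitPlane},
      deriv (deriv (mbesE α β z0)) z
        = mbesE α β z0 z * (β ^ 2 / 4 * mbesTau z0 z ^ 6 + 3 * β / 4 * mbesTau z0 z ^ 5) := by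
    intro z hz
    have hev : deriv (mbesE α β z0)
        =ᶠ[nhds z] fun z => mbesE α β z0 z * (-(β / 2) * mbesTau z0 z ^ 3) :=
      Filter.eventuallyEq_of_mem (hSopen.mem_nhds hz) hd1
    rw [hev.deriv_eq, (mbesD1_hasDerivAt α β z0 z hz).deriv]
  have hd3 : ∀ z ∈ {z : ℂ | z - z0 ∈ Complex.slitPlane},
      deriv (deriv (deriv (mbesE α β z0))) z
        = mbesE α β z0 z * (-(β ^ 3 / 8) * mbesTau z0 z ^ 9 - 9 * β ^ 2 / 8 * mbesTau z0 z ^ 8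
            - 15 * β / 8 * mbesTau z0 z ^ 7) := by
    intro z hz
    have hev : deriv (deriv (mbesE α β z0))
        =ᶠ[nhds z] fun z => mbesE α β z0 z * (β ^ 2 / 4 * mbesTau z0 z ^ 6
          + 3 * β / 4 * mbesTau z0 z ^ 5) :=
      Filter.eventuallyEq_of_mem (hSopen.mem_nhds hz) hd2
    rw [hev.deriv_eq, (mbesD2_hasDerivAt α β z0 z hz).deriv]
  intro z hzne hz
  have hune : mbesE α β z0 z ≠ 0 :=
    mul_ne_zero hα (Complex.exp_ne_zero _)
  refine ⟨hune, ?_⟩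
  rw [hd1 z hz, hd2 z hz, hd3 z hz]
  field_simp
  ring
end

section
/- For any a, z0 ∈ ℂ, the function u(z) = a/(z - z0)^3 + 60/(z - z0)^2 satisfies the Bureau equation u''''(z) = 3 u''(z) u(z) - 4 (u'(z))^2 for all z ≠ z0. -/
private lemma term_deriv (c : ℂ) (n : ℤ) (z0 z : ℂ) (h : z ≠ z0) :
    HasDerivAt (fun w : ℂ => c * (w - z0) ^ n) (c * n * (z - z0) ^ (n - 1)) z := by
  have h1 : HasDerivAt (fun w : ℂ => w - z0) 1 z := by
    simpa using (hasDerivAt_id z).sub_const z0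
  have h2 : HasDerivAt (fun w : ℂ => (w - z0) ^ n)
      ((n : ℂ) * (z - z0) ^ (n - 1) * 1) z := by
    exact (hasDerivAt_zpow n (z - z0) (Or.inl (sub_ne_zero.mpr h))).comp z h1
  simpa [mul_comm, mul_assoc, mul_left_comm] using h2.const_mul c

private lemma two_term_deriv (c d : ℂ) (m n : ℤ) (z0 z : ℂ) (h : z ≠ z0) :
    HasDerivAt (fun w : ℂ => c * (w - z0) ^ m + d * (w - z0) ^ n)
      (c * m * (z - z0) ^ (m - 1) + d * n * (z - z0) ^ (n - 1)) z :=
  (term_deriv c m z0 z h).add (term_deriv d n z0 z h)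

/-- The two-parameter family `u(z) = a/(z - z0)³ + 60/(z - z0)²` solves the
Bureau equation `u'''' = 3u''u - 4(u')²` for all `z ≠ z0`. -/
theorem bureau_exact_solution
    (a z0 : ℂ) (u : ℂ → ℂ)
    (hu : ∀ z : ℂ, u z = a / (z - z0) ^ 3 + 60 / (z - z0) ^ 2) :
    ∀ z : ℂ, z ≠ z0 →
      deriv (deriv (deriv (deriv u))) z
        = 3 * deriv (deriv u) z * u z - 4 * (deriv u z) ^ 2 := by
  set f0 : ℂ → ℂ := fun w => a * (w - z0) ^ (-3 : ℤ) + 60 * (w - z0) ^ (-2 : ℤ) with hf0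
  set f1 : ℂ → ℂ := fun w => (-3*a) * (w - z0) ^ (-4 : ℤ) + (-120) * (w - z0) ^ (-3 : ℤ) with hf1
  set f2 : ℂ → ℂ := fun w => (12*a) * (w - z0) ^ (-5 : ℤ) + 360 * (w - z0) ^ (-4 : ℤ) with hf2
  set f3 : ℂ → ℂ := fun w => (-60*a) * (w - z0) ^ (-6 : ℤ) + (-1440) * (w - z0) ^ (-5 : ℤ) with hf3
  set f4 : ℂ → ℂ := fun w => (360*a) * (w - z0) ^ (-7 : ℤ) + 7200 * (w - z0) ^ (-6 : ℤ) with hf4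
  have hu0 : u = f0 := by
    funext w
    simp only [hu, hf0, zpow_neg, zpow_ofNat, div_eq_mul_inv]
  have hd0 : ∀ w : ℂ, w ≠ z0 → HasDerivAt f0 (f1 w) w := by
    intro w h
    have := two_term_deriv a 60 (-3) (-2) z0 w h
    convert this using 1
    simp only [hf1]
    push_cast
    ring
  have hd1 : ∀ w : ℂ, w ≠ z0 → HasDerivAt f1 (f2 w) w := by
    intro w h
    have := two_term_deriv (-3*a) (-120) (-4) (-3) z0 w h
    convert this using 1
    simp only [hf2]
    push_cast
    ring
  have hd2 : ∀ w : ℂ, w ≠ z0 → HasDerivAt f2 (f3 w) w := by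
    intro w h
    have := two_term_deriv (12*a) 360 (-5) (-4) z0 w h
    convert this using 1
    simp only [hf3]
    push_cast
    ring
  have hd3 : ∀ w : ℂ, w ≠ z0 → HasDerivAt f3 (f4 w) w := by
    intro w h
    have := two_term_deriv (-60*a) (-1440) (-6) (-5) z0 w h
    convert this using 1
    simp only [hf4]
    push_cast
    ring
  intro z hz
  have hopen : {w : ℂ | w ≠ z0} ∈ nhds z :=
    (isOpen_ne).mem_nhds hz
  -- eventual equalities of iterated derivatives
  have e1 : deriv u =ᶠ[nhds z] f1 := by
    filter_upwards [hopen] with w hw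
    rw [hu0]
    exact (hd0 w hw).deriv
  have e2 : deriv (deriv u) =ᶠ[nhds z] f2 := by
    have : deriv (deriv u) =ᶠ[nhds z] deriv f1 := e1.deriv
    refine this.trans ?_
    filter_upwards [hopen] with w hw
    exact (hd1 w hw).deriv
  have e3 : deriv (deriv (deriv u)) =ᶠ[nhds z] f3 := by
    have : deriv (deriv (deriv u)) =ᶠ[nhds z] deriv f2 := e2.deriv
    refine this.trans ?_
    filter_upwards [hopen] with w hw
    exact (hd2 w hw).deriv
  have e4 : deriv (deriv (deriv (deriv u))) =ᶠ[nhds z] f4 := by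
    have : deriv (deriv (deriv (deriv u))) =ᶠ[nhds z] deriv f3 := e3.deriv
    refine this.trans ?_
    filter_upwards [hopen] with w hw
    exact (hd3 w hw).deriv
  rw [e4.eq_of_nhds, e2.eq_of_nhds, e1.eq_of_nhds, hu0]
  have hx : z - z0 ≠ 0 := sub_ne_zero.mpr hz
  simp only [hf0, hf1, hf2, hf4, zpow_neg, zpow_ofNat, ← inv_pow]
  ring
end

section
/- Let D ⊆ ℂ be a nonempty connected open set and let f be holomorphic on D. Suppose that for every z0 ∈ D there exist r > 0 and a function u holomorphic on the punctured disk {z : 0 < |z - z0| < r} ⊆ D such that (z - z0)^2 u(z) extends holomorphically to z0 with nonzero value there (i.e. u has a double pole at z0) and u''(z) = 6 u(z)^2 + f(z) on the punctured disk. Then f'' ≡ 0 on D; that is, there exist constants a, b ∈ ℂ with f(z) = a z + b for all z ∈ D. -/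
set_option maxRecDepth 8000
set_option maxHeartbeats 1600000

open Filter Function Topology FormalMultilinearSeries

private lemma peel_aux (z0 : ℂ) : ∀ (n : ℕ) (a : ℕ → ℂ) (E : ℂ → ℂ), ContinuousAt E z0 →
    (∀ᶠ z in 𝓝[≠] z0,
      (∑ k ∈ Finset.range n, a k * (z - z0) ^ k) + (z - z0) ^ n * E z = 0) →
    ∀ k < n, a k = 0 := by
  intro n
  induction n with
  | zero => intro a E _ _ k hk; omega
  | succ n ih =>
    intro a E hE hev k hk
    have ha0 : a 0 = 0 := by
      have h1 : Tendsto (fun z => (∑ j ∈ Finset.range (n+1), a j * (z - z0) ^ j)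
          + (z - z0) ^ (n+1) * E z) (𝓝[≠] z0) (𝓝 (a 0)) := by
        have : ContinuousAt (fun z => (∑ j ∈ Finset.range (n+1), a j * (z - z0) ^ j)
            + (z - z0) ^ (n+1) * E z) z0 := by
          apply ContinuousAt.add
          · fun_prop
          · exact ContinuousAt.mul (by fun_prop) hE
        have := this.continuousWithinAt (s := {z0}ᶜ)
        simpa [Finset.sum_range_succ'] using this.tendsto
      have h2 : Tendsto (fun z => (∑ j ∈ Finset.range (n+1), a j * (z - z0) ^ j)
          + (z - z0) ^ (n+1) * E z) (𝓝[≠] z0) (𝓝 0) :=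
        Tendsto.congr' (by filter_upwards [hev] with z hz using hz.symm) tendsto_const_nhds
      exact tendsto_nhds_unique h1 h2
    rcases Nat.eq_zero_or_pos k with rfl | hkpos
    · exact ha0
    · have hev' : ∀ᶠ z in 𝓝[≠] z0,
          (∑ j ∈ Finset.range n, a (j+1) * (z - z0) ^ j) + (z - z0) ^ n * E z = 0 := by
        filter_upwards [hev, self_mem_nhdsWithin] with z hz hzne
        have hw : z - z0 ≠ 0 := sub_ne_zero.mpr hzne
        have : (z - z0) * ((∑ j ∈ Finset.range n, a (j+1) * (z - z0) ^ j)
            + (z - z0) ^ n * E z) = 0 := by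
          rw [← hz, Finset.sum_range_succ', ha0, mul_add, Finset.mul_sum]
          simp only [pow_succ]
          ring_nf
        exact (mul_eq_zero.mp this).resolve_left hw
      have := ih (fun j => a (j+1)) E hE hev' (k - 1) (by omega)
      simpa [Nat.sub_add_cancel hkpos] using this

private lemma taylor_rep_aux {z0 : ℂ} :
    ∀ (n : ℕ) (φ : ℂ → ℂ) (q : FormalMultilinearSeries ℂ ℂ ℂ),
    HasFPowerSeriesAt φ q z0 → ∀ z : ℂ,
    φ z = (∑ k ∈ Finset.range n, q.coeff k * (z - z0) ^ k)
      + (z - z0) ^ n * ((Function.swap dslope z0)^[n] φ z) := by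
  intro n
  induction n with
  | zero => intro φ q hq z; simp
  | succ n ih =>
    intro φ q hq z
    have h0 : φ z = φ z0 + (z - z0) * dslope φ z0 z := by
      have := sub_smul_dslope φ z0 z
      simp only [smul_eq_mul] at this
      linear_combination -this
    have hq0 : q.coeff 0 = φ z0 := hq.coeff_zero 1
    have hrec := ih (dslope φ z0) q.fslope (hq.has_fpower_series_dslope_fslope) z
    rw [h0, hrec, Finset.sum_range_succ', mul_add, Finset.mul_sum, ← hq0]
    have hit : (Function.swap dslope z0)^[n + 1] φ = (Function.swap dslope z0)^[n] (dslope φ z0) :=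
      Function.iterate_succ_apply (Function.swap dslope z0) n φ
    rw [hit]
    simp only [coeff_fslope]
    rw [Finset.sum_congr rfl (fun x (_ : x ∈ Finset.range n) => by ring :
      ∀ x ∈ Finset.range n, (z - z0) * (q.coeff (x + 1) * (z - z0) ^ x)
        = q.coeff (x + 1) * (z - z0) ^ (x + 1))]
    ring

private lemma coeff_factorial_aux {φ : ℂ → ℂ} {p : FormalMultilinearSeries ℂ ℂ ℂ} {z0 : ℂ}
    (hp : HasFPowerSeriesAt φ p z0) (n : ℕ) :
    (n.factorial : ℂ) * p.coeff n = iteratedDeriv n φ z0 := by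
  obtain ⟨r, hball⟩ := hp
  have := hball.factorial_smul (1 : ℂ) n
  rw [iteratedDeriv_eq_iteratedFDeriv]
  rw [← this, nsmul_eq_mul]
  rfl

private lemma coeff_deriv_rel_aux {φ : ℂ → ℂ} {p q : FormalMultilinearSeries ℂ ℂ ℂ} {z0 : ℂ}
    (hp : HasFPowerSeriesAt φ p z0) (hq : HasFPowerSeriesAt (deriv φ) q z0) (n : ℕ) :
    q.coeff n = (n + 1 : ℂ) * p.coeff (n + 1) := by
  have h1 := coeff_factorial_aux hq n
  have h2 := coeff_factorial_aux hp (n + 1)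
  rw [← iteratedDeriv_succ'] at h1
  rw [← h1] at h2
  have hfac : ((n + 1).factorial : ℂ) = (n + 1 : ℂ) * (n.factorial : ℂ) := by
    rw [Nat.factorial_succ]; push_cast; ring
  rw [hfac] at h2
  have hne : (n.factorial : ℂ) ≠ 0 := Nat.cast_ne_zero.mpr (Nat.factorial_ne_zero n)
  apply mul_left_cancel₀ hne
  linear_combination -h2

/-- On an open ball, a holomorphic function with vanishing derivative is constant. -/
private lemma const_on_ball_aux {φ : ℂ → ℂ} {c : ℂ} {ε : ℝ}
    (hφ : DifferentiableOn ℂ φ (Metric.ball c ε))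
    (hd : ∀ z ∈ Metric.ball c ε, deriv φ z = 0) (hε : 0 < ε) :
    ∀ z ∈ Metric.ball c ε, φ z = φ c := by
  intro z hz
  refine (convex_ball c ε).is_const_of_fderivWithin_eq_zero hφ (fun x hx => ?_) hz
    (Metric.mem_ball_self hε)
  rw [fderivWithin_of_isOpen Metric.isOpen_ball hx]
  apply ContinuousLinearMap.ext_ring
  have : fderiv ℂ φ x 1 = deriv φ x := rfl
  simp [this, hd x hx]

/-- The key local computation: the resonance condition `f''(z0) = 0`. -/
private lemma resonance_aux {z0 : ℂ} {r : ℝ} (hr : 0 < r) {f u g : ℂ → ℂ}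
    (hfA : AnalyticAt ℂ f z0)
    (hu : DifferentiableOn ℂ u (Metric.ball z0 r \ {z0}))
    (hg : DifferentiableOn ℂ g (Metric.ball z0 r))
    (hg0 : g z0 ≠ 0)
    (hgu : ∀ z ∈ Metric.ball z0 r, z ≠ z0 → g z = (z - z0) ^ 2 * u z)
    (hode : ∀ z ∈ Metric.ball z0 r, z ≠ z0 →
      deriv (deriv u) z = 6 * (u z) ^ 2 + f z) :
    deriv (deriv f) z0 = 0 := by
  have hz0B : z0 ∈ Metric.ball z0 r := Metric.mem_ball_self hr
  have hPopen : IsOpen (Metric.ball z0 r \ {z0}) :=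
    Metric.isOpen_ball.sdiff isClosed_singleton
  have hgA : AnalyticOnNhd ℂ g (Metric.ball z0 r) := hg.analyticOnNhd Metric.isOpen_ball
  have hg1A : AnalyticOnNhd ℂ (deriv g) (Metric.ball z0 r) := hgA.deriv
  have hg2A : AnalyticOnNhd ℂ (deriv (deriv g)) (Metric.ball z0 r) := hg1A.deriv
  -- value of u on the punctured ball
  have huval : ∀ z ∈ Metric.ball z0 r \ {z0}, u z = g z / (z - z0) ^ 2 := by
    intro z hz
    have hzne : z ≠ z0 := hz.2
    have hw : (z - z0) ≠ 0 := sub_ne_zero.mpr hzne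
    rw [hgu z hz.1 hzne]
    field_simp
  -- first derivative of u
  have hu1 : ∀ z ∈ Metric.ball z0 r \ {z0},
      deriv u z = deriv g z / (z - z0) ^ 2 - 2 * g z / (z - z0) ^ 3 := by
    intro z hz
    have hzne : z ≠ z0 := hz.2
    have hw : (z - z0) ≠ 0 := sub_ne_zero.mpr hzne
    have hev : u =ᶠ[𝓝 z] (fun w => g w / (w - z0) ^ 2) := by
      filter_upwards [hPopen.mem_nhds hz] with w hw'
      exact huval w hw'
    rw [hev.deriv_eq]
    have hgd : HasDerivAt g (deriv g z) z :=
      (hg.differentiableAt (Metric.isOpen_ball.mem_nhds hz.1)).hasDerivAt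
    have hpow : HasDerivAt (fun w => (w - z0) ^ 2) (2 * (z - z0)) z := by
      simpa using ((hasDerivAt_id z).sub_const z0).fun_pow 2
    have := (hgd.fun_div hpow (pow_ne_zero 2 hw)).deriv
    rw [this]
    field_simp
  -- second derivative of u
  have hu2 : ∀ z ∈ Metric.ball z0 r \ {z0},
      deriv (deriv u) z = deriv (deriv g) z / (z - z0) ^ 2
        - 4 * deriv g z / (z - z0) ^ 3 + 6 * g z / (z - z0) ^ 4 := by
    intro z hz
    have hzne : z ≠ z0 := hz.2
    have hw : (z - z0) ≠ 0 := sub_ne_zero.mpr hzne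
    have hev : deriv u =ᶠ[𝓝 z]
        (fun w => deriv g w / (w - z0) ^ 2 - 2 * g w / (w - z0) ^ 3) := by
      filter_upwards [hPopen.mem_nhds hz] with w hw'
      exact hu1 w hw'
    rw [hev.deriv_eq]
    have hgd : HasDerivAt g (deriv g z) z :=
      (hg.differentiableAt (Metric.isOpen_ball.mem_nhds hz.1)).hasDerivAt
    have hgd1 : HasDerivAt (deriv g) (deriv (deriv g) z) z :=
      (hg1A z hz.1).differentiableAt.hasDerivAt
    have hpow2 : HasDerivAt (fun w => (w - z0) ^ 2) (2 * (z - z0)) z := by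
      simpa using ((hasDerivAt_id z).sub_const z0).fun_pow 2
    have hpow3 : HasDerivAt (fun w => (w - z0) ^ 3) (3 * (z - z0) ^ 2) z := by
      simpa using ((hasDerivAt_id z).sub_const z0).fun_pow 3
    have hterm1 := hgd1.fun_div hpow2 (pow_ne_zero 2 hw)
    have hterm2 := (hgd.const_mul (2 : ℂ)).fun_div hpow3 (pow_ne_zero 3 hw)
    have := (hterm1.fun_sub hterm2).deriv
    rw [this]
    field_simp
    ring
  -- the basic polynomial identity on the punctured ball
  have hH : ∀ z ∈ Metric.ball z0 r \ {z0},
      (z - z0) ^ 2 * deriv (deriv g) z - 4 * (z - z0) * deriv g z + 6 * g z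
        - 6 * (g z) ^ 2 - (z - z0) ^ 4 * f z = 0 := by
    intro z hz
    have hzne : z ≠ z0 := hz.2
    have hw : (z - z0) ≠ 0 := sub_ne_zero.mpr hzne
    have he := hode z hz.1 hzne
    rw [hu2 z hz, huval z hz] at he
    field_simp at he
    have h9 : (z - z0) ^ 9 * ((z - z0) ^ 2 * deriv (deriv g) z - 4 * (z - z0) * deriv g z
        + 6 * g z - 6 * (g z) ^ 2 - (z - z0) ^ 4 * f z) = 0 := by
      linear_combination (z - z0) ^ 9 * he
    exact (mul_eq_zero.mp h9).resolve_left (pow_ne_zero 9 hw)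
  -- power series data
  obtain ⟨p, hp⟩ := hgA z0 hz0B
  obtain ⟨q, hq⟩ := hg1A z0 hz0B
  obtain ⟨s, hs⟩ := hg2A z0 hz0B
  obtain ⟨t, ht⟩ := hfA
  have hqc : ∀ k : ℕ, q.coeff k = ((k : ℂ) + 1) * p.coeff (k + 1) :=
    fun k => coeff_deriv_rel_aux hp hq k
  have hsc : ∀ k : ℕ, s.coeff k = ((k : ℂ) + 1) * q.coeff (k + 1) :=
    fun k => coeff_deriv_rel_aux hq hs k
  set R0 : ℂ → ℂ := (Function.swap dslope z0)^[7] g with hR0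
  set R1 : ℂ → ℂ := (Function.swap dslope z0)^[6] (deriv g) with hR1
  set R2 : ℂ → ℂ := (Function.swap dslope z0)^[5] (deriv (deriv g)) with hR2
  set R3 : ℂ → ℂ := (Function.swap dslope z0)^[3] f with hR3
  have hg7 := taylor_rep_aux 7 g p hp
  have hg6 := taylor_rep_aux 6 (deriv g) q hq
  have hg5 := taylor_rep_aux 5 (deriv (deriv g)) s hs
  have hf3 := taylor_rep_aux 3 f t ht
  have hR0c : ContinuousAt R0 z0 := (hp.has_fpower_series_iterate_dslope_fslope 7).continuousAt
  have hR1c : ContinuousAt R1 z0 := (hq.has_fpower_series_iterate_dslope_fslope 6).continuousAt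
  have hR2c : ContinuousAt R2 z0 := (hs.has_fpower_series_iterate_dslope_fslope 5).continuousAt
  have hR3c : ContinuousAt R3 z0 := (ht.has_fpower_series_iterate_dslope_fslope 3).continuousAt
  -- the coefficient array and remainder
  set a : ℕ → ℂ := fun k =>
    if k = 0 then 6 * p.coeff 0 - 6 * p.coeff 0 ^ 2
    else if k = 1 then 2 * p.coeff 1 - 12 * p.coeff 0 * p.coeff 1
    else if k = 2 then -12 * p.coeff 0 * p.coeff 2 - 6 * p.coeff 1 ^ 2
    else if k = 3 then -12 * p.coeff 0 * p.coeff 3 - 12 * p.coeff 1 * p.coeff 2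
    else if k = 4 then 2 * p.coeff 4 - 12 * p.coeff 0 * p.coeff 4
      - 12 * p.coeff 1 * p.coeff 3 - 6 * p.coeff 2 ^ 2 - t.coeff 0
    else if k = 5 then 6 * p.coeff 5 - 12 * p.coeff 0 * p.coeff 5
      - 12 * p.coeff 1 * p.coeff 4 - 12 * p.coeff 2 * p.coeff 3 - t.coeff 1
    else if k = 6 then 12 * p.coeff 6 - 12 * p.coeff 0 * p.coeff 6
      - 12 * p.coeff 1 * p.coeff 5 - 12 * p.coeff 2 * p.coeff 4
      - 6 * p.coeff 3 ^ 2 - t.coeff 2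
    else 0 with ha
  set E : ℂ → ℂ := fun z =>
    R2 z - 4 * R1 z + 6 * R0 z - R3 z
      - 6 * (2 * (p.coeff 0 + p.coeff 1 * (z - z0) + p.coeff 2 * (z - z0) ^ 2
          + p.coeff 3 * (z - z0) ^ 3 + p.coeff 4 * (z - z0) ^ 4
          + p.coeff 5 * (z - z0) ^ 5 + p.coeff 6 * (z - z0) ^ 6) * R0 z
        + (z - z0) ^ 7 * (R0 z) ^ 2
        + (2 * p.coeff 1 * p.coeff 6 + 2 * p.coeff 2 * p.coeff 5
            + 2 * p.coeff 3 * p.coeff 4)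
        + (2 * p.coeff 2 * p.coeff 6 + 2 * p.coeff 3 * p.coeff 5
            + p.coeff 4 ^ 2) * (z - z0)
        + (2 * p.coeff 3 * p.coeff 6 + 2 * p.coeff 4 * p.coeff 5) * (z - z0) ^ 2
        + (2 * p.coeff 4 * p.coeff 6 + p.coeff 5 ^ 2) * (z - z0) ^ 3
        + (2 * p.coeff 5 * p.coeff 6) * (z - z0) ^ 4
        + (p.coeff 6 ^ 2) * (z - z0) ^ 5) with hEdef
  have hEc : ContinuousAt E z0 := by
    rw [hEdef]
    fun_prop
  have hev : ∀ᶠ z in 𝓝[≠] z0,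
      (∑ k ∈ Finset.range 7, a k * (z - z0) ^ k) + (z - z0) ^ 7 * E z = 0 := by
    have hmem : Metric.ball z0 r \ {z0} ∈ 𝓝[≠] z0 := by
      rw [Set.diff_eq, Set.inter_comm]
      exact inter_mem_nhdsWithin _ (Metric.ball_mem_nhds z0 hr)
    filter_upwards [hmem] with z hz
    have hHz := hH z hz
    have e0 := hg7 z
    have e1 := hg6 z
    have e2 := hg5 z
    have e3 := hf3 z
    simp only [Finset.sum_range_succ, Finset.sum_range_zero] at e0 e1 e2 e3
    rw [hqc 0, hqc 1, hqc 2, hqc 3, hqc 4, hqc 5] at e1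
    rw [hsc 0, hsc 1, hsc 2, hsc 3, hsc 4, hqc 1, hqc 2, hqc 3, hqc 4, hqc 5] at e2
    simp only [← hR0] at e0
    simp only [← hR1] at e1
    simp only [← hR2] at e2
    simp only [← hR3] at e3
    norm_num at e0 e1 e2 e3
    rw [e0, e1, e2, e3] at hHz
    simp only [ha, hEdef, Finset.sum_range_succ, Finset.sum_range_zero]
    norm_num
    linear_combination hHz
  have hcoef := peel_aux z0 7 a E hEc hev
  have hc0 : p.coeff 0 = 1 := by
    have h0 := hcoef 0 (by norm_num)
    simp only [ha, if_pos rfl] at h0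
    have hgz0 : p.coeff 0 = g z0 := hp.coeff_zero 1
    have hfact : p.coeff 0 * (6 - 6 * p.coeff 0) = 0 := by linear_combination h0
    rcases mul_eq_zero.mp hfact with h | h
    · exact absurd (hgz0 ▸ h) hg0
    · linear_combination -h / 6
  have hc1 : p.coeff 1 = 0 := by
    have h1 := hcoef 1 (by norm_num)
    simp only [ha] at h1
    norm_num at h1
    rw [hc0] at h1
    linear_combination -h1 / 10
  have hc2 : p.coeff 2 = 0 := by
    have h2 := hcoef 2 (by norm_num)
    simp only [ha] at h2
    norm_num at h2
    rw [hc0, hc1] at h2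
    linear_combination -h2 / 12
  have hc3 : p.coeff 3 = 0 := by
    have h3 := hcoef 3 (by norm_num)
    simp only [ha] at h3
    norm_num at h3
    rw [hc0, hc1, hc2] at h3
    linear_combination -h3 / 12
  have htc2 : t.coeff 2 = 0 := by
    have h6 := hcoef 6 (by norm_num)
    simp only [ha] at h6
    norm_num at h6
    rw [hc0, hc1, hc2, hc3] at h6
    linear_combination -h6
  have hit2 : iteratedDeriv 2 f z0 = 0 := by
    rw [← coeff_factorial_aux ht 2, htc2]
    ring
  have : iteratedDeriv 2 f z0 = deriv (deriv f) z0 := by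
    rw [show (2 : ℕ) = 1 + 1 from rfl, iteratedDeriv_succ, iteratedDeriv_one]
  rw [← this, hit2]

/-- Conclusion of the Painlevé test for `u'' = 6u² + f(z)`: if around every
point `z0` of a nonempty connected open set `D` there is a solution with a
movable double pole at `z0`, then `f'' ≡ 0` on `D`, i.e. `f(z) = az + b`. -/
theorem painleve_test_forces_affine_f
    (D : Set ℂ) (hDopen : IsOpen D) (hDne : D.Nonempty) (hDconn : IsConnected D)
    (f : ℂ → ℂ) (hf : DifferentiableOn ℂ f D)
    (hpole : ∀ z0 ∈ D, ∃ r > (0 : ℝ), ∃ u : ℂ → ℂ,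
      (Metric.ball z0 r \ {z0} ⊆ D) ∧
      DifferentiableOn ℂ u (Metric.ball z0 r \ {z0}) ∧
      (∃ g : ℂ → ℂ, DifferentiableOn ℂ g (Metric.ball z0 r) ∧ g z0 ≠ 0 ∧
        ∀ z ∈ Metric.ball z0 r, z ≠ z0 → g z = (z - z0) ^ 2 * u z) ∧
      (∀ z ∈ Metric.ball z0 r, z ≠ z0 →
        deriv (deriv u) z = 6 * (u z) ^ 2 + f z)) :
    (∀ z ∈ D, deriv (deriv f) z = 0) ∧
    ∃ a b : ℂ, ∀ z ∈ D, f z = a * z + b := by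
  have hsecond : ∀ z ∈ D, deriv (deriv f) z = 0 := by
    intro z0 hz0
    obtain ⟨r, hr, u, hsub, hu, ⟨g, hg, hg0, hgu⟩, hode⟩ := hpole z0 hz0
    exact resonance_aux hr (hf.analyticAt (hDopen.mem_nhds hz0)) hu hg hg0 hgu hode
  refine ⟨hsecond, ?_⟩
  obtain ⟨z0, hz0⟩ := hDne
  have hfA : AnalyticOnNhd ℂ f D := hf.analyticOnNhd hDopen
  have hf1A : AnalyticOnNhd ℂ (deriv f) D := hfA.deriv
  set a : ℂ := deriv f z0 with hadef
  -- first: deriv f is constant on D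
  have hconst1 : Set.EqOn (deriv f) (fun _ => a) D := by
    apply hf1A.eqOn_of_preconnected_of_eventuallyEq (analyticOnNhd_const)
      hDconn.isPreconnected hz0
    obtain ⟨ε, hε, hball⟩ := Metric.isOpen_iff.mp hDopen z0 hz0
    have hloc : ∀ z ∈ Metric.ball z0 ε, deriv f z = a := by
      intro z hz
      exact const_on_ball_aux ((hf1A.mono hball).differentiableOn)
        (fun w hw => hsecond w (hball hw)) hε z hz
    filter_upwards [Metric.ball_mem_nhds z0 hε] with z hz
    exact hloc z hz
  refine ⟨a, f z0 - a * z0, ?_⟩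
  -- second: f - a • id is constant on D
  have hgA : AnalyticOnNhd ℂ (fun z => f z - a * z) D := by
    apply hfA.sub
    apply AnalyticOnNhd.mul analyticOnNhd_const
    exact analyticOnNhd_id
  have hconst2 : Set.EqOn (fun z => f z - a * z) (fun _ => f z0 - a * z0) D := by
    apply hgA.eqOn_of_preconnected_of_eventuallyEq (analyticOnNhd_const)
      hDconn.isPreconnected hz0
    obtain ⟨ε, hε, hball⟩ := Metric.isOpen_iff.mp hDopen z0 hz0
    have hder0 : ∀ z ∈ Metric.ball z0 ε, deriv (fun w => f w - a * w) z = 0 := by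
      intro z hz
      have hdf : DifferentiableAt ℂ f z :=
        (hfA z (hball hz)).differentiableAt
      rw [deriv_fun_sub hdf (by fun_prop)]
      rw [hconst1 (hball hz)]
      have : deriv (fun w => a * w) z = a := by
        simpa using deriv_const_mul a (differentiableAt_id' (x := z))
      rw [this]
      ring
    have hloc := const_on_ball_aux ((hgA.mono hball).differentiableOn) hder0 hε
    filter_upwards [Metric.ball_mem_nhds z0 hε] with z hz
    exact hloc z hz
  intro z hz
  have := hconst2 hz
  simp only at this
  linear_combination this
end
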